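/- (Geodesic trapping estimate, core of Step 1) Let ω : [0, L] → ℝ³ be a C² unit-speed curve with ω(0) = q, ω'(0) = e₃, and ∫₀^L |ω''(s)| ds < π/4. Then for all s ∈ [0, L]: ⟨ω'(s), e₃⟩ > √2/2, |⟨ω'(s), e₁⟩| < √2/2, and |⟨ω'(s), e₂⟩| < √2/2. Consequently ⟨ω(L) − ω(0), e₃⟩ > (√2/2) L. -/

import Mathlib

open Real Set
open scoped RealInnerProductSpace

noncomputable def e₁ : EuclideanSpace ℝ (Fin 3) := EuclideanSpace.single 0 1
noncomputable def e₂ : EuclideanSpace ℝ (Fin 3) := EuclideanSpace.single 1 1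
noncomputable def e₃ : EuclideanSpace ℝ (Fin 3) := EuclideanSpace.single 2 1

/-!
The unit tangent `ω'` moves on the unit sphere with speed `‖ω''‖`, so its spherical distance
from `e₃` stays below the total turning `∫ ‖ω''‖ < π/4`. Analytically: `ω''` is orthogonal to
`ω'`, hence `f = ⟪ω', e₃⟫` satisfies `|f'| ≤ ‖ω''‖ √(1 - f²)`, and a fencing argument keeps `f`
above `cos φ` for any `φ` growing strictly faster than the accumulated turning. This gives
`⟪ω', e₃⟫ > cos (π/4) = √2/2`; the other two coordinates are then below `√2/2` because the
squares sum to `1`, and integrating `⟪ω', e₃⟫` gives the displacement bound.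
-/

section SphereCurve

variable {E : Type*} [NormedAddCommGroup E] [InnerProductSpace ℝ E]

theorem inner_deriv_self_eq_zero_of_norm_eq_one {u u' : ℝ → E}
    (hu : ∀ t, HasDerivAt u (u' t) t) (hunit : ∀ t, ‖u t‖ = 1) (t : ℝ) :
    ⟪u' t, u t⟫ = 0 := by
  have hsq : HasDerivAt (‖u ·‖ ^ 2) (2 * ⟪u t, u' t⟫) t := (hu t).norm_sq
  have hconst : (‖u ·‖ ^ 2) = fun _ => (1 : ℝ) := by
    funext s; rw [hunit s, one_pow]
  rw [hconst] at hsq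
  have := (hasDerivAt_const t (1 : ℝ)).unique hsq
  rw [real_inner_comm]
  linarith

theorem abs_inner_le_norm_mul_sqrt_one_sub_inner_sq {x y v : E} (hx : ‖x‖ = 1) (hv : ‖v‖ = 1)
    (hyx : ⟪y, x⟫ = 0) : |⟪y, v⟫| ≤ ‖y‖ * √(1 - ⟪x, v⟫ ^ 2) := by
  have hproj : ⟪y, v⟫ = ⟪y, v - ⟪x, v⟫ • x⟫ := by
    rw [inner_sub_right, real_inner_smul_right, hyx, mul_zero, sub_zero]
  have hnorm : ‖v - ⟪x, v⟫ • x‖ = √(1 - ⟪x, v⟫ ^ 2) := by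
    rw [← sqrt_sq (norm_nonneg _), norm_sub_sq_real, real_inner_smul_right, norm_smul, hv, hx,
      real_inner_comm, norm_eq_abs, mul_one, sq_abs, one_pow]
    ring_nf
  rw [hproj, ← hnorm]
  exact abs_real_inner_le_norm _ _

theorem cos_le_inner_of_norm_deriv_lt {u u' : ℝ → E} {φ φ' : ℝ → ℝ} {a b : ℝ} {v : E}
    (hu : ∀ t, HasDerivAt u (u' t) t) (hunit : ∀ t, ‖u t‖ = 1) (hv : ‖v‖ = 1)
    (hφ : ∀ t, HasDerivAt φ (φ' t) t) (hφ' : ∀ t ∈ Ico a b, ‖u' t‖ < φ' t)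
    (hφ_mem : ∀ t ∈ Ico a b, φ t ∈ Ioo 0 π) (ha : cos (φ a) ≤ ⟪u a, v⟫) :
    ∀ t ∈ Icc a b, cos (φ t) ≤ ⟪u t, v⟫ := by
  have hf : ∀ t, HasDerivAt (fun s => -⟪u s, v⟫) (-⟪u' t, v⟫) t := fun t =>
    ((hu t).inner ℝ (hasDerivAt_const t v)).neg.congr_deriv (by simp)
  have hB : ∀ t, HasDerivAt (fun s => -cos (φ s)) (sin (φ t) * φ' t) t := fun t =>
    ((hasDerivAt_cos (φ t)).comp t (hφ t)).neg.congr_deriv (by ring)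
  suffices ∀ t ∈ Icc a b, -⟪u t, v⟫ ≤ -cos (φ t) from fun t ht => neg_le_neg_iff.1 (this t ht)
  refine image_le_of_deriv_right_lt_deriv_boundary
    (continuous_iff_continuousAt.2 fun t => (hf t).continuousAt).continuousOn
    (fun t _ => (hf t).hasDerivWithinAt) (neg_le_neg ha) hB ?_
  intro t ht hcontact
  have hsin : 0 < sin (φ t) := sin_pos_of_pos_of_lt_pi (hφ_mem t ht).1 (hφ_mem t ht).2
  have hsqrt : √(1 - ⟪u t, v⟫ ^ 2) = sin (φ t) := by
    rw [neg_inj.1 hcontact, ← sin_sq, sqrt_sq hsin.le]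
  calc -⟪u' t, v⟫ ≤ |⟪u' t, v⟫| := neg_le_abs _
    _ ≤ ‖u' t‖ * sin (φ t) := by
      simpa [hsqrt] using abs_inner_le_norm_mul_sqrt_one_sub_inner_sq (hunit t) hv
        (inner_deriv_self_eq_zero_of_norm_eq_one hu hunit t)
    _ < sin (φ t) * φ' t := by
      rw [mul_comm]; exact mul_lt_mul_of_pos_left (hφ' t ht) hsin

theorem cos_lt_inner_of_integral_norm_deriv_lt {u u' : ℝ → E} {a b θ : ℝ}
    (hu : ∀ t, HasDerivAt u (u' t) t) (hunit : ∀ t, ‖u t‖ = 1) (hu' : Continuous u')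
    (hθ : ∫ t in a..b, ‖u' t‖ < θ) (hθπ : θ ≤ π) :
    ∀ t ∈ Icc a b, cos θ < ⟪u t, u a⟫ := by
  set I := ∫ t in a..b, ‖u' t‖
  obtain ⟨ε, hε, hεab⟩ := exists_pos_mul_lt (half_pos (sub_pos.2 hθ)) (b - a)
  -- The slack `θ - I` pays both for the offset `φ a > 0` and for the speed-up `ε`, which the
  -- fencing argument needs to get strict inequalities at contact points.
  set φ : ℝ → ℝ := fun t => (θ - I) / 2 + (∫ s in a..t, ‖u' s‖) + ε * (t - a)
  have hφ : ∀ t, HasDerivAt φ (‖u' t‖ + ε) t := fun t => by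
    have hint := intervalIntegral.integral_hasDerivAt_right (hu'.norm.intervalIntegrable a t)
      (hu'.norm.stronglyMeasurableAtFilter _ _) hu'.norm.continuousAt
    have hlin : HasDerivAt (fun t => ε * (t - a)) ε t :=
      (((hasDerivAt_id t).sub_const a).const_mul ε).congr_deriv (mul_one ε)
    exact (hint.const_add ((θ - I) / 2)).add hlin
  have hφ_mono : Monotone φ := monotone_of_deriv_nonneg (fun t => (hφ t).differentiableAt)
    (fun t => (hφ t).deriv ▸ by positivity)
  have hφ_mem : ∀ t ∈ Icc a b, φ t ∈ Ioo 0 θ := fun t ht =>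
    ⟨(by simp [φ]; linarith : 0 < φ a).trans_le (hφ_mono ht.1),
      (hφ_mono ht.2).trans_lt (by simp [φ, I]; linarith)⟩
  intro t ht
  calc cos θ < cos (φ t) := cos_lt_cos_of_nonneg_of_le_pi (hφ_mem t ht).1.le hθπ (hφ_mem t ht).2
    _ ≤ ⟪u t, u a⟫ := by
      refine cos_le_inner_of_norm_deriv_lt hu hunit (hunit a) hφ
        (fun _ _ => lt_add_of_pos_right _ hε) ?_ ?_ t ht
      · exact fun s hs => ⟨(hφ_mem s (Ico_subset_Icc_self hs)).1,
          (hφ_mem s (Ico_subset_Icc_self hs)).2.trans_le hθπ⟩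
      · rw [real_inner_self_eq_norm_sq, hunit, one_pow]
        exact cos_le_one _

theorem mul_sub_lt_inner_sub_of_lt_inner_deriv {g g' : ℝ → E} {v : E} {a b c : ℝ} (hab : a < b)
    (hg : ∀ t, HasDerivAt g (g' t) t) (hg' : Continuous g')
    (hc : ∀ t ∈ Icc a b, c < ⟪g' t, v⟫) :
    c * (b - a) < ⟪g b - g a, v⟫ := by
  have hcont : Continuous fun t => ⟪g' t, v⟫ := hg'.inner continuous_const
  have hftc : ∫ t in a..b, ⟪g' t, v⟫ = ⟪g b, v⟫ - ⟪g a, v⟫ :=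
    intervalIntegral.integral_eq_sub_of_hasDerivAt
      (fun t _ => ((hg t).inner ℝ (hasDerivAt_const t v)).congr_deriv (by simp))
      (hcont.intervalIntegrable _ _)
  rw [inner_sub_left, ← hftc]
  calc c * (b - a) = ∫ _ in a..b, c := by simp [mul_comm]
    _ < ∫ t in a..b, ⟪g' t, v⟫ :=
      intervalIntegral.integral_lt_integral_of_continuousOn_of_le_of_exists_lt hab
        continuousOn_const hcont.continuousOn (fun t ht => (hc t (Ioc_subset_Icc_self ht)).le)
        ⟨a, left_mem_Icc.2 hab.le, hc a (left_mem_Icc.2 hab.le)⟩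

end SphereCurve

theorem abs_lt_sqrt_two_div_two_of_sq_add_sq_le_one {x y : ℝ} (h : x ^ 2 + y ^ 2 ≤ 1)
    (hy : √2 / 2 < y) : |x| < √2 / 2 := by
  have hsq : (√2 / 2) ^ 2 = 1 / 2 := by
    rw [div_pow, sq_sqrt zero_le_two]; norm_num
  have hy_sq : (√2 / 2) ^ 2 < y ^ 2 := pow_lt_pow_left₀ hy (by positivity) two_ne_zero
  exact abs_lt_of_sq_lt_sq (by linarith) (by positivity)

theorem norm_sq_eq_inner_e₁_sq_add_inner_e₂_sq_add_inner_e₃_sq (x : EuclideanSpace ℝ (Fin 3)) :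
    ‖x‖ ^ 2 = ⟪x, e₁⟫ ^ 2 + ⟪x, e₂⟫ ^ 2 + ⟪x, e₃⟫ ^ 2 := by
  simp [EuclideanSpace.real_norm_sq_eq, Fin.sum_univ_three, e₁, e₂, e₃,
    EuclideanSpace.inner_single_right]

/-- Geodesic trapping estimate: if `ω` is a C² unit-speed curve on `[0, L]`
with `ω'(0) = e₃` and total turning `∫₀^L |ω''| < π/4`, then on all of `[0,L]`
`⟨ω', e₃⟩ > √2/2`, `|⟨ω', e₁⟩| < √2/2`, `|⟨ω', e₂⟩| < √2/2`, and consequently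
`⟨ω(L) − ω(0), e₃⟩ > (√2/2)·L`. -/
theorem stmt15 (L : ℝ) (hL : 0 < L)
    (ω ω' ω'' : ℝ → EuclideanSpace ℝ (Fin 3))
    (hd1 : ∀ s, HasDerivAt ω (ω' s) s)
    (hd2 : ∀ s, HasDerivAt ω' (ω'' s) s)
    (hcont : Continuous ω'')
    (hunit : ∀ s, ‖ω' s‖ = 1)
    (hstart : ω' 0 = e₃)
    (hturn : ∫ s in (0 : ℝ)..L, ‖ω'' s‖ < π / 4) :
    (∀ s ∈ Icc (0 : ℝ) L,
        ⟪ω' s, e₃⟫ > Real.sqrt 2 / 2 ∧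
        |⟪ω' s, e₁⟫| < Real.sqrt 2 / 2 ∧
        |⟪ω' s, e₂⟫| < Real.sqrt 2 / 2) ∧
      ⟪ω L - ω 0, e₃⟫ > (Real.sqrt 2 / 2) * L := by
  have hvert : ∀ s ∈ Icc (0 : ℝ) L, √2 / 2 < ⟪ω' s, e₃⟫ := by
    simpa [hstart, cos_pi_div_four] using
      cos_lt_inner_of_integral_norm_deriv_lt hd2 hunit hcont hturn (by linarith [pi_pos])
  have hsphere : ∀ s, ⟪ω' s, e₁⟫ ^ 2 + ⟪ω' s, e₂⟫ ^ 2 + ⟪ω' s, e₃⟫ ^ 2 = 1 := fun s => by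
    rw [← norm_sq_eq_inner_e₁_sq_add_inner_e₂_sq_add_inner_e₃_sq, hunit, one_pow]
  have hω' : Continuous ω' := continuous_iff_continuousAt.2 fun s => (hd2 s).continuousAt
  refine ⟨fun s hs => ⟨hvert s hs, ?_, ?_⟩, ?_⟩
  · exact abs_lt_sqrt_two_div_two_of_sq_add_sq_le_one
      (by linarith [hsphere s, sq_nonneg ⟪ω' s, e₂⟫]) (hvert s hs)
  · exact abs_lt_sqrt_two_div_two_of_sq_add_sq_le_one
      (by linarith [hsphere s, sq_nonneg ⟪ω' s, e₁⟫]) (hvert s hs)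
  · simpa [mul_comm] using mul_sub_lt_inner_sub_of_lt_inner_deriv hL hd1 hω' hvert
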